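/- Let p ∈ 𝔻 \ {0}, let λ ∈ ℂ with |λ| = 1 and λp = conj(p), and let φ(z) = (az+b)/(cz+d) (a,b,c,d ∈ ℂ, ad−bc ≠ 0) be a linear fractional self-map of 𝔻. If w ∈ 𝔻 satisfies conj(a)·w ≠ conj(c), then for all z ∈ 𝔻: (C_φ C_φ* JW_{ξ_p,τ_p} K_w)(z) = conj(ξ_p(conj(w))) · K_{φ(η)}(φ(z)), where η = (conj(p) − conj(w)·λ)/(1 − conj(wp)). -/

import Mathlib

open scoped ComplexConjugate InnerProductSpace ENNReal NNReal
open Complex Metric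

noncomputable section

abbrev H2 : Type := lp (fun _ : ℕ => ℂ) 2

namespace H2

/-- Evaluation of an element of `H²` (given by its sequence of Taylor coefficients)
at a point `z` of the unit disk: `f(z) = ∑ aₙ zⁿ`. -/
def eval (f : H2) (z : ℂ) : ℂ := ∑' n : ℕ, (f : ∀ _ : ℕ, ℂ) n * z ^ n

/-- The Szegő kernel function `K_w(z) = 1/(1 - conj w * z)`. -/
def ker (w z : ℂ) : ℂ := (1 - conj w * z)⁻¹

lemma kernel_memℓp (w : ℂ) (hw : ‖w‖ < 1) :
    Memℓp (fun n : ℕ => (conj w) ^ n) 2 := by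
  apply memℓp_gen
  have hsum : Summable (fun n : ℕ => (‖w‖ ^ 2) ^ n) :=
    summable_geometric_of_lt_one (by positivity) (by nlinarith [norm_nonneg w])
  refine hsum.congr fun n => ?_
  have h2 : ((2 : ℝ≥0∞).toReal) = ((2 : ℕ) : ℝ) := by simp
  rw [h2, Real.rpow_natCast]
  simp [norm_pow, ← pow_mul, Nat.mul_comm]

/-- The reproducing kernel of `H²` at `w` in the unit disk, as an element of `H²`. -/
def kernel (w : ℂ) : H2 :=
  if hw : ‖w‖ < 1 then ⟨fun n : ℕ => (conj w) ^ n, kernel_memℓp w hw⟩ else 0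

/-- `T` is the composition operator `C_φ` on `H²`. -/
def IsCompOp (φ : ℂ → ℂ) (T : H2 →L[ℂ] H2) : Prop :=
  ∀ f : H2, ∀ z : ℂ, ‖z‖ < 1 → eval (T f) z = eval f (φ z)

/-- `W` is the weighted composition operator `W_{ψ,φ}` on `H²`. -/
def IsWCompOp (ψ φ : ℂ → ℂ) (W : H2 →L[ℂ] H2) : Prop :=
  ∀ f : H2, ∀ z : ℂ, ‖z‖ < 1 → eval (W f) z = ψ z * eval f (φ z)

/-- A conjugation on `H²`: a conjugate-linear involution satisfying `⟪Cx, Cy⟫ = ⟪y, x⟫`. -/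
structure IsConjugation (C : H2 → H2) : Prop where
  map_add : ∀ x y : H2, C (x + y) = C x + C y
  map_smul : ∀ (c : ℂ) (x : H2), C (c • x) = conj c • C x
  invol : ∀ x : H2, C (C x) = x
  inner_conj : ∀ x y : H2, ⟪C x, C y⟫_ℂ = ⟪y, x⟫_ℂ

/-- `T` is `C`-normal: `C T* T C = T T*`. -/
def CNormal (C : H2 → H2) (T : H2 →L[ℂ] H2) : Prop :=
  ∀ x : H2, C ((ContinuousLinearMap.adjoint T) (T (C x)))
      = T ((ContinuousLinearMap.adjoint T) x)

/-- `T` is a normal operator: `T* T = T T*`. -/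
def IsNormalOp (T : H2 →L[ℂ] H2) : Prop :=
  (ContinuousLinearMap.adjoint T).comp T = T.comp (ContinuousLinearMap.adjoint T)

/-- `T` is a unitary operator. -/
def IsUnitaryOp (T : H2 →L[ℂ] H2) : Prop :=
  T.comp (ContinuousLinearMap.adjoint T) = ContinuousLinearMap.id ℂ H2 ∧
  (ContinuousLinearMap.adjoint T).comp T = ContinuousLinearMap.id ℂ H2

/-- `C` is the conjugation `J_μ` on `H²`: `(J_μ f)(z) = conj (f (μ * conj z))`. -/
def IsJmu (μ : ℂ) (C : H2 → H2) : Prop :=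
  ∀ f : H2, ∀ z : ℂ, ‖z‖ < 1 → eval (C f) z = conj (eval f (μ * conj z))

/-- `ξ_p(z) = √(1-|p|²) / (1 - conj p * z)`. -/
def xi (p z : ℂ) : ℂ := (Real.sqrt (1 - ‖p‖ ^ 2) : ℂ) / (1 - conj p * z)

/-- `τ_p(z) = λ (p - z) / (1 - conj p * z)`. -/
def tau (p lam z : ℂ) : ℂ := lam * (p - z) / (1 - conj p * z)

/-- `C` is the conjugation `J W_{ξ_p, τ_p}` on `H²`:
`(C f)(z) = conj (ξ_p(conj z) * f (τ_p (conj z)))`. -/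
def IsJW (p lam : ℂ) (C : H2 → H2) : Prop :=
  ∀ f : H2, ∀ z : ℂ, ‖z‖ < 1 →
    eval (C f) z = conj (xi p (conj z) * eval f (tau p lam (conj z)))

end H2

/-!
Write `K_w` for the reproducing kernel and `T = C_φ`. Evaluation at `z` is the inner product
with `K_z`, so `(T T* C K_w)(z) = ⟪T K_{φ z}, C K_w⟫`, and the conjugation axioms turn this into
`conj ((C T K_{φ z})(w))`. Since `C = J W_{ξ_p, τ_p}` and `T K_{φ z} = K_{φ z} ∘ φ`, this equals
`conj (ξ_p(conj w)) · conj (K_{φ z}(φ (τ_p(conj w))))`. The kernel is Hermitian, and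
`λ p = conj p` rewrites `τ_p(conj w)` as `η`.
-/

namespace H2

lemma kernel_apply {w : ℂ} (hw : ‖w‖ < 1) (n : ℕ) :
    (kernel w : ∀ _ : ℕ, ℂ) n = (conj w) ^ n := by
  rw [kernel, dif_pos hw]

lemma inner_kernel {w : ℂ} (hw : ‖w‖ < 1) (f : H2) : ⟪kernel w, f⟫_ℂ = eval f w := by
  rw [lp.inner_eq_tsum, eval]
  refine tsum_congr fun n => ?_
  simp [kernel_apply hw, mul_comm]

lemma norm_conj_mul_lt_one {u v : ℂ} (hu : ‖u‖ < 1) (hv : ‖v‖ < 1) : ‖conj u * v‖ < 1 := by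
  rw [norm_mul, RCLike.norm_conj]
  nlinarith [norm_nonneg u, norm_nonneg v]

lemma eval_kernel {u s : ℂ} (hu : ‖u‖ < 1) (hs : ‖s‖ < 1) : eval (kernel u) s = ker u s := by
  rw [eval, ker, ← tsum_geometric_of_norm_lt_one (norm_conj_mul_lt_one hu hs)]
  refine tsum_congr fun n => ?_
  rw [kernel_apply hu, mul_pow]

lemma conj_ker (u v : ℂ) : conj (ker u v) = ker v u := by
  simp only [ker, map_inv₀, map_sub, map_one, map_mul, Complex.conj_conj, mul_comm]

lemma eval_adjoint (T : H2 →L[ℂ] H2) {u : ℂ} (hu : ‖u‖ < 1) (f : H2) :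
    eval (ContinuousLinearMap.adjoint T f) u = ⟪T (kernel u), f⟫_ℂ := by
  rw [← inner_kernel hu, ContinuousLinearMap.adjoint_inner_right]

lemma IsCompOp.eval_kernel {φ : ℂ → ℂ} {T : H2 →L[ℂ] H2} (hT : IsCompOp φ T) {u s : ℂ}
    (hu : ‖u‖ < 1) (hs : ‖s‖ < 1) (hφs : ‖φ s‖ < 1) : eval (T (kernel u)) s = ker u (φ s) := by
  rw [hT _ s hs, H2.eval_kernel hu hφs]

lemma IsConjugation.inner_right_comm {C : H2 → H2} (hC : IsConjugation C) (x y : H2) :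
    ⟪x, C y⟫_ℂ = ⟪y, C x⟫_ℂ := by
  rw [← hC.inner_conj, hC.invol]

lemma normSq_one_sub_conj_mul_sub_normSq_sub (p u : ℂ) :
    Complex.normSq (1 - conj p * u) - Complex.normSq (p - u)
      = (1 - Complex.normSq p) * (1 - Complex.normSq u) := by
  simp only [Complex.normSq_apply, Complex.sub_re, Complex.sub_im, Complex.mul_re,
    Complex.mul_im, Complex.conj_re, Complex.conj_im, Complex.one_re, Complex.one_im]
  ring

lemma norm_tau_lt_one {p lam u : ℂ} (hp : ‖p‖ < 1) (hlam : ‖lam‖ = 1) (hu : ‖u‖ < 1) :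
    ‖tau p lam u‖ < 1 := by
  have hden : 1 - conj p * u ≠ 0 :=
    sub_ne_zero.mpr fun h => by simpa [← h] using norm_conj_mul_lt_one hp hu
  rw [tau, norm_div, norm_mul, hlam, one_mul, div_lt_one (norm_pos_iff.mpr hden),
    ← sq_lt_sq₀ (norm_nonneg _) (norm_nonneg _), ← Complex.normSq_eq_norm_sq,
    ← Complex.normSq_eq_norm_sq, ← sub_pos, normSq_one_sub_conj_mul_sub_normSq_sub,
    Complex.normSq_eq_norm_sq, Complex.normSq_eq_norm_sq]
  have hp2 : ‖p‖ ^ 2 < 1 := by nlinarith [norm_nonneg p]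
  have hu2 : ‖u‖ ^ 2 < 1 := by nlinarith [norm_nonneg u]
  exact mul_pos (sub_pos.mpr hp2) (sub_pos.mpr hu2)

lemma tau_conj {p lam : ℂ} (hlp : lam * p = conj p) (w : ℂ) :
    tau p lam (conj w) = (conj p - conj w * lam) / (1 - conj (w * p)) := by
  rw [tau, mul_sub, hlp, map_mul]
  ring_nf

end H2

theorem stmt2_general (p lam w : ℂ)
    (hp : ‖p‖ < 1) (hlam : ‖lam‖ = 1) (hlp : lam * p = conj p)
    (φ : ℂ → ℂ)
    (hself : ∀ z : ℂ, ‖z‖ < 1 → ‖φ z‖ < 1)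
    (hw : ‖w‖ < 1)
    (T : H2 →L[ℂ] H2) (hT : H2.IsCompOp φ T)
    (C : H2 → H2) (hC : H2.IsConjugation C) (hCJ : H2.IsJW p lam C) :
    ∀ z : ℂ, ‖z‖ < 1 →
      H2.eval (T ((ContinuousLinearMap.adjoint T) (C (H2.kernel w)))) z
        = conj (H2.xi p (conj w)) *
            H2.ker (φ ((conj p - conj w * lam) / (1 - conj (w * p)))) (φ z) := by
  intro z hz
  have hτ : ‖H2.tau p lam (conj w)‖ < 1 :=
    H2.norm_tau_lt_one hp hlam (by rwa [RCLike.norm_conj])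
  calc H2.eval (T (ContinuousLinearMap.adjoint T (C (H2.kernel w)))) z
      = ⟪T (H2.kernel (φ z)), C (H2.kernel w)⟫_ℂ := by
        rw [hT _ z hz, H2.eval_adjoint T (hself z hz)]
    _ = H2.eval (C (T (H2.kernel (φ z)))) w := by rw [hC.inner_right_comm, H2.inner_kernel hw]
    _ = conj (H2.xi p (conj w) * H2.ker (φ z) (φ (H2.tau p lam (conj w)))) := by
        rw [hCJ _ w hw, hT.eval_kernel (hself z hz) hτ (hself _ hτ)]
    _ = _ := by rw [map_mul, H2.conj_ker, H2.tau_conj hlp]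

/-- Lemma 2.3 (i): for a linear fractional self-map `φ` and `w ∈ 𝔻` with `conj a * w ≠ conj c`,
`C_φ C_φ* (J W_{ξ_p,τ_p}) K_w (z) = conj (ξ_p (conj w)) * K_{φ(η)}(φ(z))`
where `η = (conj p - conj w * λ) / (1 - conj (w p))`. -/
theorem stmt2 (p lam a b c d w : ℂ)
    (hp : ‖p‖ < 1) (hp0 : p ≠ 0) (hlam : ‖lam‖ = 1) (hlp : lam * p = conj p)
    (φ : ℂ → ℂ) (hφ : ∀ z : ℂ, φ z = (a * z + b) / (c * z + d))
    (hdet : a * d - b * c ≠ 0)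
    (hden : ∀ z : ℂ, ‖z‖ < 1 → c * z + d ≠ 0)
    (hself : ∀ z : ℂ, ‖z‖ < 1 → ‖φ z‖ < 1)
    (hw : ‖w‖ < 1) (hwa : conj a * w ≠ conj c)
    (T : H2 →L[ℂ] H2) (hT : H2.IsCompOp φ T)
    (C : H2 → H2) (hC : H2.IsConjugation C) (hCJ : H2.IsJW p lam C) :
    ∀ z : ℂ, ‖z‖ < 1 →
      H2.eval (T ((ContinuousLinearMap.adjoint T) (C (H2.kernel w)))) z
        = conj (H2.xi p (conj w)) *
            H2.ker (φ ((conj p - conj w * lam) / (1 - conj (w * p)))) (φ z) :=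
  stmt2_general p lam w hp hlam hlp φ hself hw T hT C hC hCJ
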